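/- Let A ⊆ ℕ be a WM set and let Z ⊆ ℕ have density zero (lim_{N→∞} (1/N)|Z ∩ [1,N]| = 0). Then A \ Z is a WM set, and d(A \ Z) = d(A). -/

import Mathlib

open MeasureTheory Filter Topology Polynomial

/-- The space `Ω = {0,1}^ℕ`. -/
abbrev Omega : Type := ℕ → Bool

/-- The shift map `(Tω)ₙ = ω_{n+1}`. -/
def shift : Omega → Omega := fun ω n => ω (n + 1)

open Classical in
/-- The indicator sequence `ξ = 1_S ∈ Ω` of a set `S ⊆ ℕ`. -/
noncomputable def indicatorSeq (S : Set ℕ) : Omega := fun n => decide (n ∈ S)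

/-- The orbit closure `X_ξ` of a point `ξ ∈ Ω` under the shift. -/
def orbitClosure (ξ : Omega) : Set Omega := closure {ω | ∃ n : ℕ, shift^[n] ξ = ω}

open Classical in
/-- The number of elements of `S` in the interval `[a, b]`. -/
noncomputable def countIn (S : Set ℕ) (a b : ℕ) : ℕ :=
  ((Finset.Icc a b).filter (fun n => n ∈ S)).card

/-- `S ⊆ ℕ` has density `δ`: `(1/N)|S ∩ [1,N]| → δ`. -/
def HasDensity (S : Set ℕ) (δ : ℝ) : Prop :=
  Tendsto (fun N : ℕ => (countIn S 1 N : ℝ) / N) atTop (𝓝 δ)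

/-- The upper density of `S ⊆ ℕ`: `limsup (1/N)|S ∩ [1,N]|`. -/
noncomputable def upperDensity (S : Set ℕ) : ℝ :=
  limsup (fun N : ℕ => (countIn S 1 N : ℝ) / N) atTop

/-- `ξ` is a generic point for the measure `μ`: Birkhoff averages of every continuous
function converge to the integral. -/
def IsGeneric (ξ : Omega) (μ : Measure Omega) : Prop :=
  ∀ f : C(Omega, ℝ),
    Tendsto (fun N : ℕ => (∑ n ∈ Finset.range N, f (shift^[n] ξ)) / N) atTop
      (𝓝 (∫ x, f x ∂μ))

/-- `A ⊆ ℕ` is a WM set: it has positive density and `1_A` is generic for a shift-invariant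
Borel probability measure `μ` supported on the orbit closure `X_{1_A}` such that the
product system `(X × X, μ × μ, T × T)` is ergodic (weak mixing). -/
def IsWMSet (A : Set ℕ) : Prop :=
  (∃ δ : ℝ, 0 < δ ∧ HasDensity A δ) ∧
  ∃ (μ : Measure Omega) (_ : IsProbabilityMeasure μ),
    μ (orbitClosure (indicatorSeq A)) = 1 ∧
    IsGeneric (indicatorSeq A) μ ∧
    Ergodic (fun x : Omega × Omega => (shift x.1, shift x.2)) (μ.prod μ)


/-!
Removing a density-zero set `Z` changes neither the density of `A` nor the Birkhoff averages
along `1_A`. A continuous function on `{0,1}^ℕ` depends, up to `ε`, only on the first `m`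
coordinates, and `T^n 1_{A \ Z}` agrees with `T^n 1_A` there unless `n + k ∈ Z` for some `k < m`;
this happens only for a density-zero set of `n`. Hence `1_{A \ Z}` is generic for the same
measure `μ`, so the weak mixing of `μ` carries over unchanged, and a measure with a generic point
is carried by its orbit closure (Urysohn's lemma and inner regularity).
-/

open Finset

lemma countIn_mono {S T : Set ℕ} (h : S ⊆ T) (a b : ℕ) : countIn S a b ≤ countIn T a b := by
  classical
  unfold countIn
  exact card_le_card (monotone_filter_right _ fun _ _ hn => h hn)

lemma countIn_union_le (S T : Set ℕ) (a b : ℕ) :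
    countIn (S ∪ T) a b ≤ countIn S a b + countIn T a b := by
  classical
  unfold countIn
  simpa only [filter_or, Set.mem_union] using card_union_le _ _

lemma countIn_preimage_add_le (S : Set ℕ) (k N : ℕ) :
    countIn ((· + k) ⁻¹' S) 1 N ≤ countIn S 1 (N + k) := by
  classical
  unfold countIn
  refine card_le_card_of_injOn (· + k) (fun n hn => ?_) (add_left_injective k).injOn
  simp only [coe_filter, mem_Icc, Set.mem_preimage] at hn ⊢
  obtain ⟨⟨h1, hN⟩, hS⟩ := hn
  exact ⟨⟨by omega, by omega⟩, hS⟩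

lemma HasDensity.zero_of_subset {S T : Set ℕ} (hT : HasDensity T 0) (h : S ⊆ T) :
    HasDensity S 0 :=
  squeeze_zero (fun _ => by positivity)
    (fun N => div_le_div_of_nonneg_right (by exact_mod_cast countIn_mono h 1 N) N.cast_nonneg) hT

lemma HasDensity.union_zero {S T : Set ℕ} (hS : HasDensity S 0) (hT : HasDensity T 0) :
    HasDensity (S ∪ T) 0 := by
  refine squeeze_zero (fun _ => by positivity) (fun N => ?_) (by simpa using hS.add hT)
  rw [← add_div]
  exact div_le_div_of_nonneg_right (by exact_mod_cast countIn_union_le S T 1 N) N.cast_nonneg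

lemma HasDensity.preimage_add_zero {S : Set ℕ} (hS : HasDensity S 0) (k : ℕ) :
    HasDensity ((· + k) ⁻¹' S) 0 := by
  have hshift : Tendsto (fun N : ℕ => 2 * ((countIn S 1 (N + k) : ℝ) / (N + k : ℕ))) atTop
      (𝓝 0) := by
    simpa using (hS.comp (tendsto_add_atTop_nat k)).const_mul 2
  refine squeeze_zero' (.of_forall fun _ => by positivity) ?_ hshift
  filter_upwards [eventually_ge_atTop k, eventually_gt_atTop 0] with N hkN hN
  have hNk : ((N + k : ℕ) : ℝ) ≤ 2 * N := by exact_mod_cast (by omega : N + k ≤ 2 * N)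
  calc (countIn ((· + k) ⁻¹' S) 1 N : ℝ) / N ≤ countIn S 1 (N + k) / N := by
        gcongr; exact_mod_cast countIn_preimage_add_le S k N
    _ = 2 * (countIn S 1 (N + k) / (2 * N)) := by field_simp
    _ ≤ 2 * (countIn S 1 (N + k) / (N + k : ℕ)) := by gcongr

lemma HasDensity.sdiff {A Z : Set ℕ} {δ : ℝ} (hA : HasDensity A δ) (hZ : HasDensity Z 0) :
    HasDensity (A \ Z) δ := by
  refine tendsto_of_tendsto_of_tendsto_of_le_of_le (by simpa using hA.sub hZ) hA (fun N => ?_)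
    (fun N => div_le_div_of_nonneg_right (Nat.cast_le.mpr (countIn_mono Set.sdiff_subset 1 N))
      N.cast_nonneg)
  have hcover : (countIn A 1 N : ℝ) ≤ countIn (A \ Z) 1 N + countIn Z 1 N := by
    exact_mod_cast (countIn_mono (by simp) 1 N).trans (countIn_union_le _ _ 1 N)
  rw [← sub_div]
  exact div_le_div_of_nonneg_right (by linarith) N.cast_nonneg

lemma HasDensity.setOf_exists_lt_add_mem {S : Set ℕ} (hS : HasDensity S 0) (m : ℕ) :
    HasDensity {n | ∃ k < m, n + k ∈ S} 0 := by
  induction m with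
  | zero => exact hS.zero_of_subset fun n ⟨k, hk, _⟩ => absurd hk k.not_lt_zero
  | succ m ih =>
    refine (ih.union_zero (hS.preimage_add_zero m)).zero_of_subset fun n ⟨k, hk, hkS⟩ => ?_
    rcases Nat.lt_succ_iff_lt_or_eq.mp hk with hk | rfl
    · exact Or.inl ⟨k, hk, hkS⟩
    · exact Or.inr hkS

open Classical in
lemma HasDensity.tendsto_card_filter_range_div {S : Set ℕ} (hS : HasDensity S 0) :
    Tendsto (fun N : ℕ => (#{n ∈ range N | n ∈ S} : ℝ) / N) atTop (𝓝 0) := by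
  refine squeeze_zero (fun _ => by positivity) (fun N => ?_)
    (by simpa [one_div] using hS.add tendsto_one_div_atTop_nhds_zero_nat)
  rw [← one_div, ← add_div]
  refine div_le_div_of_nonneg_right ?_ N.cast_nonneg
  have hsub : {n ∈ range N | n ∈ S} ⊆ insert 0 {n ∈ Icc 1 N | n ∈ S} := by
    intro n hn
    simp only [mem_filter, mem_range, mem_insert, mem_Icc] at hn ⊢
    rcases n.eq_zero_or_pos with h0 | hpos
    · exact Or.inl h0
    · exact Or.inr ⟨⟨hpos, hn.1.le⟩, hn.2⟩
  exact_mod_cast (card_le_card hsub).trans (card_insert_le _ _)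

open Classical in
lemma tendsto_average_zero_of_small_off_density_zero {u : ℕ → ℝ} {C : ℝ}
    (hC : ∀ n, |u n| ≤ C) (hsmall : ∀ ε > 0, ∃ B : Set ℕ, HasDensity B 0 ∧ ∀ n ∉ B, |u n| ≤ ε) :
    Tendsto (fun N : ℕ => (∑ n ∈ range N, u n) / N) atTop (𝓝 0) := by
  rw [NormedAddGroup.tendsto_nhds_zero]
  intro ε hε
  obtain ⟨B, hB, hsmallB⟩ := hsmall (ε / 2) (by positivity)
  have hC0 : 0 ≤ C := (abs_nonneg _).trans (hC 0)
  have hBcount := (hB.tendsto_card_filter_range_div.const_mul C).eventually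
    (gt_mem_nhds (show C * 0 < ε / 2 by simpa using half_pos hε))
  filter_upwards [hBcount, eventually_gt_atTop 0] with N hBN hN
  have hN' : (0 : ℝ) < N := by exact_mod_cast hN
  have hpoint : ∀ n, |u n| ≤ ε / 2 + C * if n ∈ B then 1 else 0 := by
    intro n
    by_cases hn : n ∈ B
    · simpa [hn] using (hC n).trans (le_add_of_nonneg_left (by positivity))
    · simpa [hn] using hsmallB n hn
  have hsum : |∑ n ∈ range N, u n| ≤ ε / 2 * N + C * #{n ∈ range N | n ∈ B} :=
    calc |∑ n ∈ range N, u n| ≤ ∑ n ∈ range N, |u n| := abs_sum_le_sum_abs _ _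
      _ ≤ ∑ n ∈ range N, (ε / 2 + C * if n ∈ B then 1 else 0) :=
        sum_le_sum fun n _ => hpoint n
      _ = ε / 2 * N + C * #{n ∈ range N | n ∈ B} := by
        rw [sum_add_distrib, ← mul_sum, sum_boole]; simp [mul_comm]
  rw [Real.norm_eq_abs, abs_div, Nat.abs_cast, div_lt_iff₀ hN']
  rw [mul_div_assoc', div_lt_iff₀ hN'] at hBN
  linarith

lemma exists_dist_lt_of_forall_lt_eq {α E : Type*} [UniformSpace α] [DiscreteUniformity α]
    [CompactSpace α] [PseudoMetricSpace E] (f : C(ℕ → α, E)) {ε : ℝ} (hε : 0 < ε) :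
    ∃ m : ℕ, ∀ x y : ℕ → α, (∀ i < m, x i = y i) → dist (f x) (f y) < ε := by
  let : MetricSpace (ℕ → α) :=
    PiNat.metricSpaceOfDiscreteUniformity fun _ => DiscreteUniformity.eq_principal_setRelId α
  obtain ⟨δ, hδ, hf⟩ := Metric.uniformContinuous_iff.mp
    (CompactSpace.uniformContinuous_of_continuous f.continuous) ε hε
  obtain ⟨m, hm⟩ := exists_pow_lt_of_lt_one hδ (by norm_num : (1 / 2 : ℝ) < 1)
  exact ⟨m, fun x y hxy =>
    hf ((PiNat.mem_cylinder_iff_dist_le.mp fun i hi => hxy i hi).trans_lt hm)⟩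

lemma shift_iterate_apply (ω : Omega) (n i : ℕ) : shift^[n] ω i = ω (n + i) := by
  induction n generalizing ω with
  | zero => simp
  | succ n ih => rw [Function.iterate_succ_apply, ih, shift, Nat.add_right_comm, Nat.add_assoc]

lemma IsGeneric.of_hasDensity_ne {ξ ξ' : Omega} {μ : Measure Omega} (hξ : IsGeneric ξ μ)
    (hne : HasDensity {n | ξ' n ≠ ξ n} 0) : IsGeneric ξ' μ := by
  intro f
  suffices h : Tendsto (fun N : ℕ => (∑ n ∈ range N, (f (shift^[n] ξ') - f (shift^[n] ξ))) / N)
      atTop (𝓝 0) by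
    simpa [sum_sub_distrib, sub_div] using (hξ f).add h
  refine tendsto_average_zero_of_small_off_density_zero (C := 2 * ‖f‖) (fun n => ?_)
    fun ε hε => ?_
  · calc |f (shift^[n] ξ') - f (shift^[n] ξ)| ≤ ‖f (shift^[n] ξ')‖ + ‖f (shift^[n] ξ)‖ :=
          abs_sub _ _
      _ ≤ ‖f‖ + ‖f‖ := add_le_add (f.norm_coe_le_norm _) (f.norm_coe_le_norm _)
      _ = 2 * ‖f‖ := (two_mul _).symm
  obtain ⟨m, hm⟩ := exists_dist_lt_of_forall_lt_eq f hε
  refine ⟨_, hne.setOf_exists_lt_add_mem m, fun n hn => (hm _ _ fun i hi => ?_).le⟩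
  rw [shift_iterate_apply, shift_iterate_apply]
  by_contra h
  exact hn ⟨i, hi, h⟩

lemma measure_compl_eq_zero_of_forall_integral_eq_zero {X : Type*} [TopologicalSpace X]
    [T2Space X] [LocallyCompactSpace X] [MeasurableSpace X] [OpensMeasurableSpace X]
    {μ : Measure X} [IsFiniteMeasure μ] [μ.InnerRegularCompactLTTop] {C : Set X}
    (hC : IsClosed C) (h : ∀ g : C(X, ℝ), Set.EqOn g 0 C → ∫ x, g x ∂μ = 0) : μ Cᶜ = 0 := by
  by_contra hpos
  obtain ⟨K, hKC, hK, hμK⟩ := hC.isOpen_compl.measurableSet.exists_lt_isCompact_of_ne_top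
    (measure_ne_top μ _) (pos_iff_ne_zero.mpr hpos)
  obtain ⟨g, hgK, hgC, hgsupp, hg01⟩ :=
    exists_continuous_one_zero_of_isCompact hK hC (Set.disjoint_left.mpr fun _ hx => hKC hx)
  have hle : K.indicator 1 ≤ g := by
    intro x
    by_cases hx : x ∈ K
    · simp [hx, hgK hx]
    · simpa [hx] using (hg01 x).1
  have hKg := integral_mono ((integrable_indicator_iff hK.measurableSet).mpr
    (integrableOn_const (measure_ne_top μ K)))
    (g.continuous.integrable_of_hasCompactSupport hgsupp) hle
  rw [integral_indicator_one hK.measurableSet, h g hgC] at hKg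
  exact (ENNReal.toReal_pos hμK.ne' (measure_ne_top μ K)).not_ge hKg

lemma IsGeneric.measure_orbitClosure {ξ : Omega} {μ : Measure Omega} [IsProbabilityMeasure μ]
    (hξ : IsGeneric ξ μ) : μ (orbitClosure ξ) = 1 := by
  refine (prob_compl_eq_zero_iff isClosed_closure.measurableSet).mp
    (measure_compl_eq_zero_of_forall_integral_eq_zero isClosed_closure fun g hg => ?_)
  refine tendsto_nhds_unique (hξ g) ?_
  simp [hg (subset_closure ⟨_, rfl⟩)]

/-- Removing a set of density zero from a WM set yields a WM set with the same density. -/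
theorem WM_sdiff_density_zero
    (A Z : Set ℕ) (hA : IsWMSet A) (hZ : HasDensity Z 0) :
    IsWMSet (A \ Z) ∧ ∀ δ : ℝ, HasDensity A δ → HasDensity (A \ Z) δ := by
  obtain ⟨⟨δ, hδ, hAδ⟩, μ, hμ, -, hgen, herg⟩ := hA
  have hgen' : IsGeneric (indicatorSeq (A \ Z)) μ := by
    refine hgen.of_hasDensity_ne (hZ.zero_of_subset fun n hn => ?_)
    by_contra hnZ
    simp [indicatorSeq, hnZ] at hn
  exact ⟨⟨⟨δ, hδ, hAδ.sdiff hZ⟩, μ, hμ, hgen'.measure_orbitClosure, hgen', herg⟩,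
    fun δ' hδ' => hδ'.sdiff hZ⟩
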